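/- Let ε ∈ (0,1/2). The set of nonzero partial derivatives of NW_{n,ε} with respect to admissible sets is a downward-closed set of multilinear monomials: if m is the (nonzero) partial derivative of NW_{n,ε} with respect to some admissible set D, and m′ is a multilinear monomial whose set of variables is contained in the set of variables of m, then there exists an admissible set D′ such that m′ is the partial derivative of NW_{n,ε} with respect to D′. -/

import Mathlib

open MvPolynomial

noncomputable section

/-- Evaluation at `i` of the univariate polynomial with coefficient vector `a`. -/
def polyEval {Fn : Type*} [CommRing Fn] {d : ℕ} (a : Fin d → Fn) (i : Fn) : Fn :=
  ∑ k : Fin d, a k * i ^ (k : ℕ)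

/-- The Nisan–Wigderson polynomial over the coefficient field `K`. -/
def NW (Fn : Type*) [CommRing Fn] [Fintype Fn] (K : Type*) [CommSemiring K] (d : ℕ) :
    MvPolynomial (Fn × Fn) K :=
  ∑ a : Fin d → Fn, ∏ i : Fn, X (i, polyEval a i)

/-- Iterated partial derivative with respect to a finite set of variables. -/
def pderivFinset {σ : Type*} {K : Type*} [CommSemiring K] (D : Finset σ)
    (f : MvPolynomial σ K) : MvPolynomial σ K :=
  D.toList.foldr (fun v g => pderiv v g) f

/-!
Every monomial of `NW_{n,ε}` is `∏_{v ∈ Γ_a} x_v` for the graph `Γ_a` of a polynomial `a` of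
degree `< ⌈εn⌉`, so the derivative with respect to `D` is the sum of the monomials
`∏_{v ∈ Γ_a \ D} x_v` over those `a` whose graph contains `D`. An admissible `D` has at least
`⌈εn⌉` points with distinct first coordinates, so at most one graph contains it. Hence if the
derivative with respect to `D` is `∏_{v ∈ V} x_v`, then `V = Γ_a \ D` for a unique `a`, and
for `V' ⊆ V` the set `D ∪ (V \ V') ⊆ Γ_a` is again admissible, with derivative `∏_{v ∈ V'} x_v`.
-/

open Finset

section MultilinearMonomials

variable {σ K : Type*} [CommSemiring K]

lemma pderiv_prod_X [DecidableEq σ] (v : σ) (W : Finset σ) :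
    pderiv v (∏ w ∈ W, X w : MvPolynomial σ K) =
      if v ∈ W then ∏ w ∈ W.erase v, X w else 0 := by
  induction W using Finset.induction with
  | empty => simp
  | insert u W hu ih =>
    rw [prod_insert hu, Derivation.leibniz, ih, pderiv_X, smul_eq_mul, smul_eq_mul]
    by_cases hvu : v = u
    · subst hvu
      simp [hu]
    · by_cases hvW : v ∈ W
      · simp [hvu, hvW, erase_insert_of_ne (Ne.symm hvu), prod_insert, hu]
      · simp [hvu, hvW]

lemma prod_X_injective [Nontrivial K] :
    Function.Injective (fun W : Finset σ => (∏ v ∈ W, X v : MvPolynomial σ K)) := by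
  classical
  have key : ∀ W₁ W₂ : Finset σ, (∏ v ∈ W₁, X v : MvPolynomial σ K) = ∏ v ∈ W₂, X v →
      W₁ ⊆ W₂ := by
    intro W₁ W₂ h v hv
    by_contra hv₂
    have h' := congrArg (pderiv v) h
    rw [pderiv_prod_X, pderiv_prod_X, if_pos hv, if_neg hv₂] at h'
    exact (isRegular_prod_X _).ne_zero h'
  exact fun W₁ W₂ h => (key W₁ W₂ h).antisymm (key W₂ W₁ h.symm)

lemma foldr_pderiv_prod_X [DecidableEq σ] {L : List σ} (hL : L.Nodup) (W : Finset σ) :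
    L.foldr (fun v g => pderiv v g) (∏ w ∈ W, X w : MvPolynomial σ K) =
      if L.toFinset ⊆ W then ∏ w ∈ W \ L.toFinset, X w else 0 := by
  induction L with
  | nil => simp
  | cons v L ih =>
    obtain ⟨hvL, hL⟩ := List.nodup_cons.mp hL
    rw [List.foldr_cons, ih hL, List.toFinset_cons]
    by_cases hLW : L.toFinset ⊆ W
    · have hmem : v ∈ W \ L.toFinset ↔ v ∈ W := by simp [hvL]
      rw [if_pos hLW, pderiv_prod_X, sdiff_insert]
      simp [hmem, insert_subset_iff, hLW]
    · simp [insert_subset_iff, hLW]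

lemma pderivFinset_prod_X [DecidableEq σ] (D W : Finset σ) :
    pderivFinset D (∏ w ∈ W, X w : MvPolynomial σ K) =
      if D ⊆ W then ∏ w ∈ W \ D, X w else 0 := by
  rw [pderivFinset, foldr_pderiv_prod_X (nodup_toList D), toList_toFinset]

lemma pderivFinset_sum {ι : Type*} (D : Finset σ) (s : Finset ι) (f : ι → MvPolynomial σ K) :
    pderivFinset D (∑ i ∈ s, f i) = ∑ i ∈ s, pderivFinset D (f i) := by
  unfold pderivFinset
  induction D.toList with
  | nil => rfl
  | cons v L ih => simp only [List.foldr_cons, ih, map_sum]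

end MultilinearMonomials

lemma polyEval_eq_eval_ofFn {R : Type*} [CommRing R] [DecidableEq R] {d : ℕ}
    (a : Fin d → R) (x : R) : polyEval a x = (Polynomial.ofFn d a).eval x := by
  simp [polyEval, Polynomial.ofFn_eq_sum_monomial, Polynomial.eval_finsetSum]

lemma eq_of_polyEval_eq_on {R : Type*} [CommRing R] [IsDomain R] {d : ℕ} {a b : Fin d → R}
    {s : Finset R} (hs : d ≤ #s) (h : ∀ x ∈ s, polyEval a x = polyEval b x) : a = b := by
  classical
  have hdeg : ∀ c : Fin d → R, (Polynomial.ofFn d c).degree < #s := fun c =>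
    (Polynomial.ofFn_degree_lt c).trans_le (by exact_mod_cast hs)
  refine Polynomial.injective_ofFn d
    (Polynomial.eq_of_degrees_lt_of_eval_finset_eq s (hdeg a) (hdeg b) fun x hx => ?_)
  rw [← polyEval_eq_eval_ofFn, ← polyEval_eq_eval_ofFn, h x hx]

lemma Finset.exists_fin_enum_of_injOn_fst {α β : Type*} [DecidableEq α] [DecidableEq β]
    (D : Finset (α × β)) (h : Set.InjOn Prod.fst (D : Set (α × β))) :
    ∃ (row : Fin #D → α) (col : Fin #D → β), Function.Injective row ∧
      univ.image (fun k => (row k, col k)) = D := by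
  let e : Fin #D ≃ D := D.equivFin.symm
  refine ⟨fun k => (e k : α × β).1, fun k => (e k : α × β).2, fun k l hkl => ?_, ?_⟩
  · exact e.injective (Subtype.ext (h (e k).2 (e l).2 hkl))
  · ext v
    simp only [Prod.mk.eta, mem_image, mem_univ, true_and]
    exact ⟨fun ⟨k, hk⟩ => hk ▸ (e k).2, fun hv => ⟨e.symm ⟨v, hv⟩, by simp⟩⟩

section NisanWigderson

variable {Fn : Type*} [CommRing Fn] [Fintype Fn] [DecidableEq Fn] {d : ℕ}

def polyGraph (a : Fin d → Fn) : Finset (Fn × Fn) :=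
  univ.image fun i => (i, polyEval a i)

lemma mem_polyGraph {a : Fin d → Fn} {v : Fn × Fn} : v ∈ polyGraph a ↔ polyEval a v.1 = v.2 := by
  simp only [polyGraph, mem_image, mem_univ, true_and]
  exact ⟨fun ⟨i, hi⟩ => hi ▸ rfl, fun h => ⟨v.1, by rw [h]⟩⟩

lemma injOn_fst_polyGraph (a : Fin d → Fn) : Set.InjOn Prod.fst (polyGraph a : Set (Fn × Fn)) :=
  fun v hv w hw hvw =>
    Prod.ext hvw (by rw [← mem_polyGraph.mp hv, ← mem_polyGraph.mp hw, hvw])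

lemma card_polyGraph (a : Fin d → Fn) : #(polyGraph a) = Fintype.card Fn :=
  card_image_of_injective _ fun _ _ h => congrArg Prod.fst h

variable (K : Type*) [CommSemiring K]

lemma NW_eq_sum_prod_polyGraph :
    NW Fn K d = ∑ a : Fin d → Fn, ∏ v ∈ polyGraph a, X v := by
  refine sum_congr rfl fun a _ => ?_
  rw [polyGraph, prod_image fun i _ j _ hij => congrArg Prod.fst hij]

lemma pderivFinset_NW (D : Finset (Fn × Fn)) :
    pderivFinset D (NW Fn K d) =
      ∑ a : Fin d → Fn, if D ⊆ polyGraph a then ∏ v ∈ polyGraph a \ D, X v else 0 := by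
  rw [NW_eq_sum_prod_polyGraph, pderivFinset_sum]
  exact sum_congr rfl fun a _ => pderivFinset_prod_X D _

variable {K}

lemma exists_subset_polyGraph_of_pderivFinset_NW_ne_zero {D : Finset (Fn × Fn)}
    (h : pderivFinset D (NW Fn K d) ≠ 0) : ∃ a : Fin d → Fn, D ⊆ polyGraph a := by
  by_contra! hD
  exact h (by rw [pderivFinset_NW]; exact sum_eq_zero fun a _ => if_neg (hD a))

variable [IsDomain Fn]

lemma eq_of_subset_polyGraph {D : Finset (Fn × Fn)} (hD : d ≤ #D) {a b : Fin d → Fn}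
    (ha : D ⊆ polyGraph a) (hb : D ⊆ polyGraph b) : a = b := by
  refine eq_of_polyEval_eq_on (s := D.image Prod.fst) ?_ fun x hx => ?_
  · rwa [card_image_of_injOn ((injOn_fst_polyGraph a).mono ha)]
  · obtain ⟨v, hv, rfl⟩ := mem_image.mp hx
    rw [mem_polyGraph.mp (ha hv), mem_polyGraph.mp (hb hv)]

lemma pderivFinset_NW_of_subset_polyGraph {D : Finset (Fn × Fn)} (hD : d ≤ #D)
    {a : Fin d → Fn} (ha : D ⊆ polyGraph a) :
    pderivFinset D (NW Fn K d) = ∏ v ∈ polyGraph a \ D, X v := by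
  rw [pderivFinset_NW, sum_eq_single a, if_pos ha]
  · exact fun b _ hba => if_neg fun hb => hba (eq_of_subset_polyGraph hD hb ha)
  · exact fun h => absurd (mem_univ a) h

end NisanWigderson

theorem pderiv_NW_downward_closed_general
    (n : ℕ) (Fn : Type*) [Field Fn] [Fintype Fn] [DecidableEq Fn]
    (hcard : Fintype.card Fn = n)
    (K : Type*) [Field K]
    (ε : ℝ)
    (t : ℕ) (hεt : ε * n ≤ (t : ℝ))
    (row col : Fin t → Fn) (hrow : Function.Injective row)
    (V : Finset (Fn × Fn))
    (hV : pderivFinset (Finset.image (fun k => (row k, col k)) Finset.univ)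
        (NW Fn K ⌈ε * n⌉₊) = ∏ v ∈ V, X v)
    (V' : Finset (Fn × Fn)) (hV' : V' ⊆ V) :
    ∃ (t' : ℕ) (row' col' : Fin t' → Fn), Function.Injective row' ∧
      ε * n ≤ (t' : ℝ) ∧ t' ≤ n ∧
      pderivFinset (Finset.image (fun k => (row' k, col' k)) Finset.univ)
          (NW Fn K ⌈ε * n⌉₊) = ∏ v ∈ V', X v := by
  set D := univ.image fun k => (row k, col k)
  have hDcard : #D = t := by
    rw [card_image_of_injective _ fun k l h => hrow (congrArg Prod.fst h), card_univ,
      Fintype.card_fin]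
  have hdD : ⌈ε * n⌉₊ ≤ #D := hDcard ▸ Nat.ceil_le.mpr hεt
  obtain ⟨a, ha⟩ := exists_subset_polyGraph_of_pderivFinset_NW_ne_zero
    (hV ▸ (isRegular_prod_X V).ne_zero)
  have hVa : polyGraph a \ D = V :=
    prod_X_injective (K := K) ((pderivFinset_NW_of_subset_polyGraph hdD ha).symm.trans hV)
  set D' := D ∪ (V \ V')
  have hDD' : #D ≤ #D' := card_le_card subset_union_left
  have hD'a : D' ⊆ polyGraph a := union_subset ha (hVa ▸ sdiff_subset.trans sdiff_subset)
  obtain ⟨row', col', hrow', himg⟩ :=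
    D'.exists_fin_enum_of_injOn_fst ((injOn_fst_polyGraph a).mono hD'a)
  refine ⟨#D', row', col', hrow', ?_, ?_, ?_⟩
  · exact hεt.trans (by exact_mod_cast hDcard ▸ hDD')
  · exact hcard ▸ card_polyGraph a ▸ card_le_card hD'a
  · rw [himg, pderivFinset_NW_of_subset_polyGraph (hdD.trans hDD') hD'a, Finset.sdiff_union_distrib, ← Finset.sdiff_sdiff_left',
      hVa, Finset.sdiff_sdiff_eq_self hV']

/-- Downward closedness of the nonzero partial derivatives of `NW_{n,ε}` (for
`ε ∈ (0,1/2)`) with respect to admissible sets: if the derivative of `NW_{n,ε}` with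
respect to an admissible set `D` (given by distinct rows `row k` and columns `col k`,
`εn ≤ t ≤ n`) is the multilinear monomial `∏_{v ∈ V} X v`, and `V' ⊆ V`, then the
multilinear monomial `∏_{v ∈ V'} X v` is also the partial derivative of `NW_{n,ε}` with
respect to some admissible set `D'`. -/
theorem pderiv_NW_downward_closed
    (n : ℕ) (Fn : Type*) [Field Fn] [Fintype Fn] [DecidableEq Fn]
    (hcard : Fintype.card Fn = n)
    (K : Type*) [Field K]
    (ε : ℝ) (hε : ε ∈ Set.Ioo (0 : ℝ) (1 / 2))
    (t : ℕ) (hεt : ε * n ≤ (t : ℝ)) (htn : t ≤ n)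
    (row col : Fin t → Fn) (hrow : Function.Injective row)
    (V : Finset (Fn × Fn))
    (hV : pderivFinset (Finset.image (fun k => (row k, col k)) Finset.univ)
        (NW Fn K ⌈ε * n⌉₊) = ∏ v ∈ V, X v)
    (V' : Finset (Fn × Fn)) (hV' : V' ⊆ V) :
    ∃ (t' : ℕ) (row' col' : Fin t' → Fn), Function.Injective row' ∧
      ε * n ≤ (t' : ℝ) ∧ t' ≤ n ∧
      pderivFinset (Finset.image (fun k => (row' k, col' k)) Finset.univ)
          (NW Fn K ⌈ε * n⌉₊) = ∏ v ∈ V', X v :=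
  pderiv_NW_downward_closed_general n Fn hcard K ε t hεt row col hrow V hV V' hV'
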